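/- Let h : ℝ² → ℝ be C² on an open neighborhood of (0,0), write its arguments as (α, β), and set c = (∂h/∂β)(0,0). For r > 0 and λ ∈ ℝ with (r, λ/r) in the neighborhood, define g(λ, r) = h(r, λ/r). Then there exist constants C > 0 and r₀ > 0 such that for every r with 0 < r < r₀: the function λ ↦ g(λ, r) is differentiable at λ = 0 with derivative (∂g/∂λ)(0, r) = r⁻¹ (∂h/∂β)(r, 0), and |(∂g/∂λ)(0, r) − c/r| ≤ C. -/

import Mathlib

/-! The chain rule along `λ ↦ (r, λ / r)` gives the derivative `r⁻¹ ∂_β h(r, 0)`. Since `h` is C², its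
derivative is differentiable at the origin, so `∂_β h(r, 0) - ∂_β h(0, 0) = O(r)`; dividing by `r`
leaves a bounded remainder. -/

open Filter Topology Asymptotics

section

variable {𝕜 E F : Type*} [NontriviallyNormedField 𝕜] [NormedAddCommGroup E] [NormedSpace 𝕜 E]
  [NormedAddCommGroup F] [NormedSpace 𝕜 F]

theorem hasDerivAt_comp_mk_div {h : E × 𝕜 → F} {x : E} (hh : DifferentiableAt 𝕜 h (x, 0))
    (r : 𝕜) : HasDerivAt (fun t : 𝕜 => h (x, t / r)) (r⁻¹ • fderiv 𝕜 h (x, 0) (0, 1)) 0 := by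
  have hcurve : HasDerivAt (fun t : 𝕜 => (x, t / r)) ((0 : E), r⁻¹) 0 :=
    (hasDerivAt_const 0 x).prodMk (by simpa using (hasDerivAt_id (0 : 𝕜)).div_const r)
  have hh' : HasFDerivAt h (fderiv 𝕜 h (x, 0)) (x, 0 / r) := by
    rw [zero_div]; exact hh.hasFDerivAt
  have hdir : r⁻¹ • ((0 : E), (1 : 𝕜)) = (0, r⁻¹) := by simp
  rw [← map_smul, hdir]
  exact hh'.comp_hasDerivAt 0 hcurve

theorem norm_inv_smul_smul_le (r : 𝕜) (u : E) : ‖r⁻¹ • r • u‖ ≤ ‖u‖ := by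
  rcases eq_or_ne r 0 with rfl | hr
  · simp
  · rw [inv_smul_smul₀ hr]

theorem isBigO_inv_smul_fderiv_sub {h : E → F} (hh : ContDiffAt 𝕜 2 h 0) (u v : E) :
    (fun r : 𝕜 => r⁻¹ • (fderiv 𝕜 h (r • u) v - fderiv 𝕜 h 0 v)) =O[𝓝 0] fun _ => (1 : ℝ) := by
  have hdiff : DifferentiableAt 𝕜 (fderiv 𝕜 h) 0 :=
    (hh.fderiv_right (m := 1) le_rfl).differentiableAt one_ne_zero
  have hline : Tendsto (fun r : 𝕜 => r • u) (𝓝 0) (𝓝 0) :=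
    (continuous_id.smul continuous_const).tendsto' 0 0 (zero_smul 𝕜 u)
  have hsub : (fun r : 𝕜 => fderiv 𝕜 h (r • u) v - fderiv 𝕜 h 0 v) =O[𝓝 0] fun r => r • u := by
    simpa [Function.comp_def] using
      ((ContinuousLinearMap.apply 𝕜 F v).isBigO_comp _ _).trans
        (hdiff.hasFDerivAt.isBigO_sub.comp_tendsto hline)
  calc (fun r : 𝕜 => r⁻¹ • (fderiv 𝕜 h (r • u) v - fderiv 𝕜 h 0 v))
      =O[𝓝 0] fun r => r⁻¹ • r • u := (isBigO_refl _ _).smul hsub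
    _ =O[𝓝 0] fun _ => (1 : ℝ) :=
      .of_bound ‖u‖ (.of_forall fun r => by simpa using norm_inv_smul_smul_le r u)

end

/-- Joint C² smoothness of h in (α, β) = (r, λ/r) near (0,0) implies that the first-order
perturbation ∂_λ g|_{λ=0} of g(λ, r) = h(r, λ/r) exists for small r > 0, equals
r⁻¹ (∂h/∂β)(r, 0), and differs from c/r (with c = (∂h/∂β)(0,0)) by a bounded amount. -/
theorem stmt_10 (h : ℝ × ℝ → ℝ) (U : Set (ℝ × ℝ)) (hU : IsOpen U) (hU0 : (0, 0) ∈ U)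
    (hh : ContDiffOn ℝ 2 h U) :
    ∃ C : ℝ, 0 < C ∧ ∃ r₀ : ℝ, 0 < r₀ ∧ ∀ r : ℝ, 0 < r → r < r₀ →
      HasDerivAt (fun lam : ℝ => h (r, lam / r))
        (r⁻¹ * fderiv ℝ h (r, 0) ((0 : ℝ), (1 : ℝ))) 0 ∧
      |r⁻¹ * fderiv ℝ h (r, 0) ((0 : ℝ), (1 : ℝ)) -
        fderiv ℝ h (0, 0) ((0 : ℝ), (1 : ℝ)) / r| ≤ C := by
  have hC2 : ContDiffAt ℝ 2 h 0 := hh.contDiffAt (hU.mem_nhds hU0)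
  obtain ⟨C, hC, hbound⟩ := (isBigO_inv_smul_fderiv_sub hC2 (1, 0) (0, 1)).exists_pos
  have hdiff : ∀ᶠ r : ℝ in 𝓝 0, DifferentiableAt ℝ h (r, 0) :=
    ((continuous_id.prodMk continuous_const).tendsto' 0 0 rfl).eventually
      ((hC2.eventually (by decide)).mono fun _ hp => hp.differentiableAt two_ne_zero)
  obtain ⟨r₀, hr₀, hsmall⟩ := Metric.eventually_nhds_iff.1 (hbound.bound.and hdiff)
  refine ⟨C, hC, r₀, hr₀, fun r hr hrr => ?_⟩
  obtain ⟨hle, hdr⟩ := hsmall (show dist r 0 < r₀ by simpa [abs_of_pos hr])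
  simp only [Prod.smul_mk, smul_eq_mul, mul_one, mul_zero, norm_one] at hle
  refine ⟨hasDerivAt_comp_mk_div hdr r, ?_⟩
  rwa [div_eq_inv_mul, ← mul_sub, ← Real.norm_eq_abs]
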